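/- arXiv:1411.0925 — 5 statements merged into one kernel-verified Lean document; each statement's English description precedes it below -/
import Mathlib

section
/- Let p > 1 be a real number and define M_p(n) = S_p(n) / (n^p · C(2n, n)). Then 1 ≤ M_p(n) for every natural number n ≥ 1, and limsup_{n→∞} M_p(n) ≤ 2. -/
open Filter

lemma choose_sum_key (n : ℕ) (hn : 1 ≤ n) :
    ∑ j ∈ Finset.Icc 1 n, Nat.choose (n + j) n ≤ 2 * Nat.choose (2 * n) n := by
  have h1 : ∑ j ∈ Finset.Icc 1 n, Nat.choose (n + j) n ≤
      ∑ j ∈ Finset.Icc 0 n, Nat.choose (n + j) n :=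
    Finset.sum_le_sum_of_subset (Finset.Icc_subset_Icc_left (Nat.zero_le 1))
  have h2 : ∑ j ∈ Finset.Icc 0 n, Nat.choose (n + j) n =
      ∑ i ∈ Finset.Icc n (n + n), Nat.choose i n := by
    rw [show Finset.Icc n (n + n) = (Finset.Icc 0 n).map (addLeftEmbedding n) by simp,
      Finset.sum_map]
    simp [addLeftEmbedding_apply]
  have h3 : ∑ i ∈ Finset.Icc n (n + n), Nat.choose i n = Nat.choose (n + n + 1) (n + 1) :=
    Nat.sum_Icc_choose _ _
  have h4 : Nat.choose (n + n + 1) (n + 1) ≤ 2 * Nat.choose (2 * n) n := by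
    rw [Nat.choose_succ_succ (n + n) n]
    have hle : Nat.choose (n + n) (n + 1) ≤ Nat.choose (n + n) n := by
      have h := Nat.choose_le_middle (n + 1) (n + n)
      rwa [(by omega : (n + n) / 2 = n)] at h
    rw [two_mul n]
    simp only [Nat.succ_eq_add_one]
    omega
  omega

/-- For real `p > 1`, with `M_p(n) = S_p(n) / (n^p * C(2n, n))`, we have
`1 ≤ M_p(n)` for all `n ≥ 1` and `limsup_{n→∞} M_p(n) ≤ 2`. -/
theorem ratio_bounds_of_one_lt (p : ℝ) (hp : 1 < p)
    (M : ℕ → ℝ)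
    (hM : ∀ n : ℕ, M n =
      (∑ j ∈ Finset.Icc 1 n, (j : ℝ) ^ p * (Nat.choose (n + j) j : ℝ)) /
        ((n : ℝ) ^ p * (Nat.choose (2 * n) n : ℝ))) :
    (∀ n : ℕ, 1 ≤ n → 1 ≤ M n) ∧ Filter.limsup M Filter.atTop ≤ 2 := by
  have hD : ∀ n : ℕ, 1 ≤ n → (0 : ℝ) < (n : ℝ) ^ p * (Nat.choose (2 * n) n : ℝ) := by
    intro n hn
    have h1 : (0 : ℝ) < (n : ℝ) ^ p :=
      Real.rpow_pos_of_pos (by exact_mod_cast hn) p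
    have h2 : (0 : ℝ) < (Nat.choose (2 * n) n : ℝ) := by
      exact_mod_cast Nat.choose_pos (by omega)
    positivity
  have hlow : ∀ n : ℕ, 1 ≤ n → 1 ≤ M n := by
    intro n hn
    rw [hM n, le_div_iff₀ (hD n hn), one_mul]
    have hmem : n ∈ Finset.Icc 1 n := Finset.mem_Icc.mpr ⟨hn, le_rfl⟩
    calc (n : ℝ) ^ p * (Nat.choose (2 * n) n : ℝ)
        = (n : ℝ) ^ p * (Nat.choose (n + n) n : ℝ) := by rw [two_mul]
      _ ≤ ∑ j ∈ Finset.Icc 1 n, (j : ℝ) ^ p * (Nat.choose (n + j) j : ℝ) := by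
          apply Finset.single_le_sum (f := fun j : ℕ => (j : ℝ) ^ p * (Nat.choose (n + j) j : ℝ))
            (fun j _ => ?_) hmem
          have : (0 : ℝ) ≤ (j : ℝ) ^ p := Real.rpow_nonneg (Nat.cast_nonneg j) p
          positivity
  have hhigh : ∀ n : ℕ, 1 ≤ n → M n ≤ 2 := by
    intro n hn
    rw [hM n, div_le_iff₀ (hD n hn)]
    have hsym : ∀ j : ℕ, Nat.choose (n + j) j = Nat.choose (n + j) n := by
      intro j
      have := Nat.choose_symm (Nat.le_add_left j n)
      simpa using this.symm
    have hstep : ∑ j ∈ Finset.Icc 1 n, (j : ℝ) ^ p * (Nat.choose (n + j) j : ℝ) ≤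
        (n : ℝ) ^ p * ∑ j ∈ Finset.Icc 1 n, (Nat.choose (n + j) n : ℝ) := by
      rw [Finset.mul_sum]
      apply Finset.sum_le_sum
      intro j hj
      obtain ⟨hj1, hj2⟩ := Finset.mem_Icc.mp hj
      rw [hsym j]
      have hjn : (j : ℝ) ^ p ≤ (n : ℝ) ^ p :=
        Real.rpow_le_rpow (Nat.cast_nonneg j) (by exact_mod_cast hj2) (by linarith)
      have hc : (0 : ℝ) ≤ (Nat.choose (n + j) n : ℝ) := Nat.cast_nonneg _
      exact mul_le_mul_of_nonneg_right hjn hc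
    have hkey : ∑ j ∈ Finset.Icc 1 n, (Nat.choose (n + j) n : ℝ) ≤
        2 * (Nat.choose (2 * n) n : ℝ) := by
      have := choose_sum_key n hn
      push_cast [← Nat.cast_sum]
      exact_mod_cast this
    have hnp : (0 : ℝ) ≤ (n : ℝ) ^ p := Real.rpow_nonneg (Nat.cast_nonneg n) p
    calc ∑ j ∈ Finset.Icc 1 n, (j : ℝ) ^ p * (Nat.choose (n + j) j : ℝ)
        ≤ (n : ℝ) ^ p * ∑ j ∈ Finset.Icc 1 n, (Nat.choose (n + j) n : ℝ) := hstep
      _ ≤ (n : ℝ) ^ p * (2 * (Nat.choose (2 * n) n : ℝ)) :=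
          mul_le_mul_of_nonneg_left hkey hnp
      _ = 2 * ((n : ℝ) ^ p * (Nat.choose (2 * n) n : ℝ)) := by ring
  refine ⟨hlow, ?_⟩
  apply Filter.limsup_le_of_le
  · exact Filter.isCoboundedUnder_le_of_eventually_le Filter.atTop
      (x := 1) (Filter.eventually_atTop.mpr ⟨1, hlow⟩)
  · exact Filter.eventually_atTop.mpr ⟨1, hhigh⟩
end

section
/- Let p = 1 and define M_1(n) = S_1(n) / (n · C(2n, n)). Then 1 ≤ M_1(n) for every natural number n ≥ 1, and limsup_{n→∞} M_1(n) ≤ 3. -/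
/-!
Absorbing the factor `j` turns `j * C(n + j, j)` into `(n + 1) * C(n + j, n + 1)`, so the hockey-stick
identity gives `S_1(n) = (n + 1) * C(2n + 1, n + 2)`, and hence `M_1(n) = (2n + 1) / (n + 2)` for
`n ≥ 1`. This lies in `[1, 2)` and tends to `2`.
-/

open Filter Finset

lemma Nat.mul_choose_add_eq (n : ℕ) {j : ℕ} (hj : j ≠ 0) :
    j * (n + j).choose j = (n + 1) * (n + j).choose (n + 1) := by
  obtain ⟨k, rfl⟩ : ∃ k, j = k + 1 := ⟨j - 1, by omega⟩
  have hk := Nat.add_one_mul_choose_eq (n + k) k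
  have hn := Nat.add_one_mul_choose_eq (n + k) n
  rw [Nat.choose_symm_add] at hn
  rw [← Nat.add_assoc, Nat.mul_comm (k + 1), ← hk, hn, Nat.mul_comm]

lemma Nat.sum_mul_choose_add_eq (n : ℕ) :
    ∑ j ∈ Icc 1 n, j * (n + j).choose j = (n + 1) * (2 * n + 1).choose (n + 2) := by
  have absorb : ∑ j ∈ Icc 1 n, j * (n + j).choose j
      = (n + 1) * ∑ j ∈ Icc 1 n, (n + j).choose (n + 1) := by
    rw [mul_sum]
    exact sum_congr rfl fun j hj ↦ Nat.mul_choose_add_eq n (by grind)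
  have shift : ∑ j ∈ Icc 1 n, (n + j).choose (n + 1)
      = ∑ m ∈ Icc (n + 1) (n + n), m.choose (n + 1) := by
    rw [← map_add_left_Icc 1 n n, sum_map]
    rfl
  rw [absorb, shift, Nat.sum_Icc_choose, two_mul]

lemma Nat.add_one_mul_choose_mul_eq (n : ℕ) :
    (n + 1) * (2 * n + 1).choose (n + 2) * (n + 2) = (2 * n + 1) * (n * (2 * n).choose n) := by
  have hup := Nat.add_one_mul_choose_eq (2 * n) (n + 1)
  have hdown := Nat.choose_succ_right_eq (2 * n) n
  rw [show 2 * n - n = n by omega] at hdown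
  calc (n + 1) * (2 * n + 1).choose (n + 2) * (n + 2)
      = (n + 1) * ((2 * n + 1) * (2 * n).choose (n + 1)) := by rw [hup, Nat.mul_assoc]
    _ = (2 * n + 1) * ((2 * n).choose (n + 1) * (n + 1)) := by ring
    _ = (2 * n + 1) * (n * (2 * n).choose n) := by rw [hdown, Nat.mul_comm n]

lemma sum_mul_choose_add_div_eq {n : ℕ} (hn : n ≠ 0) :
    (∑ j ∈ Icc 1 n, (j : ℝ) * ((n + j).choose j : ℝ)) / ((n : ℝ) * ((2 * n).choose n : ℝ))
      = (2 * n + 1) / (n + 2) := by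
  have hden : (n : ℝ) * ((2 * n).choose n : ℝ) ≠ 0 := by
    have := Nat.choose_pos (Nat.le_mul_of_pos_left n two_pos)
    positivity
  rw [div_eq_div_iff hden (by positivity)]
  exact_mod_cast (Nat.sum_mul_choose_add_eq n).symm ▸ Nat.add_one_mul_choose_mul_eq n

lemma tendsto_two_mul_add_one_div_add_two :
    Tendsto (fun n : ℕ ↦ (2 * n + 1 : ℝ) / (n + 2)) atTop (nhds 2) := by
  simpa [add_comm, div_one] using
    tendsto_add_mul_div_add_mul_atTop_nhds (1 : ℝ) 2 2 one_ne_zero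

/-- With `M_1(n) = S_1(n) / (n * C(2n, n))` where `S_1(n) = ∑_{j=1}^n j * C(n+j, j)`,
we have `1 ≤ M_1(n)` for all `n ≥ 1` and `limsup_{n→∞} M_1(n) ≤ 3`. -/
theorem ratio_bounds_p_one
    (M : ℕ → ℝ)
    (hM : ∀ n : ℕ, M n =
      (∑ j ∈ Finset.Icc 1 n, (j : ℝ) * (Nat.choose (n + j) j : ℝ)) /
        ((n : ℝ) * (Nat.choose (2 * n) n : ℝ))) :
    (∀ n : ℕ, 1 ≤ n → 1 ≤ M n) ∧ Filter.limsup M Filter.atTop ≤ 3 := by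
  have hM' : ∀ n, 1 ≤ n → M n = (2 * n + 1) / (n + 2) := fun n hn ↦
    (hM n).trans (sum_mul_choose_add_div_eq (by omega))
  refine ⟨fun n hn ↦ ?_, ?_⟩
  · rw [hM' n hn, le_div_iff₀ (by positivity)]
    have : (1 : ℝ) ≤ n := by exact_mod_cast hn
    linarith
  · have hev : M =ᶠ[atTop] fun n : ℕ ↦ (2 * n + 1 : ℝ) / (n + 2) :=
      eventually_atTop.mpr ⟨1, hM'⟩
    rw [limsup_congr hev, tendsto_two_mul_add_one_div_add_two.limsup_eq]
    norm_num
end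

section
/- For every natural number n > 2, the central binomial coefficient satisfies 4^n / (2√n) < C(2n, n) < (2n+2)^n / (n+1)!. -/
-- binomial-type lemma: x^(n+1) + (n+1) x^n ≤ (x+1)^(n+1)
lemma aux_pow (x : ℕ) : ∀ n : ℕ, x^(n+1) + (n+1) * x^n ≤ (x+1)^(n+1) := by
  intro n
  induction n with
  | zero => simp
  | succ n ih =>
    have h : (x+1)^(n+2) = (x+1)^(n+1) * (x+1) := by ring
    calc x^(n+2) + (n+2) * x^(n+1)
        ≤ (x^(n+1) + (n+1) * x^n) * (x+1) := by
          have : (x^(n+1) + (n+1) * x^n) * (x+1) = x^(n+2) + (n+2) * x^(n+1) + (n+1)*x^n := by ring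
          rw [this]; exact Nat.le_add_right _ _
      _ ≤ (x+1)^(n+1) * (x+1) := Nat.mul_le_mul_right _ ih
      _ = (x+1)^(n+2) := by ring

-- key: (2n+1)(n+1)^n ≤ (n+1)(n+2)^n
lemma aux_key (n : ℕ) (hn : 1 ≤ n) : (2*n+1) * (n+1)^n ≤ (n+1) * (n+2)^n := by
  obtain ⟨m, rfl⟩ := Nat.exists_eq_succ_of_ne_zero (by omega : n ≠ 0)
  have h := aux_pow (m+2) m
  have h2 : (m+2) * ((m+2)^(m+1) + (m+1) * (m+2)^m) ≤ (m+2) * (m+3)^(m+1) :=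
    Nat.mul_le_mul_left _ h
  calc (2*(m+1)+1) * ((m+1)+1)^(m+1)
      = (m+2) * ((m+2)^(m+1) + (m+1) * (m+2)^m) := by ring
    _ ≤ (m+2) * (m+3)^(m+1) := h2
    _ = ((m+1)+1) * ((m+1)+2)^(m+1) := by ring

-- lower bound (nat): 16^n < 4 n c_n^2 for n ≥ 2
lemma aux_lower : ∀ n, 2 ≤ n → 16^n < 4 * n * (Nat.centralBinom n)^2 := by
  intro n hn
  induction n, hn using Nat.le_induction with
  | base => decide
  | succ n hn ih =>
    set c := Nat.centralBinom n with hc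
    set C := Nat.centralBinom (n+1) with hC
    have key : (n+1) * C = 2 * (2*n+1) * c := Nat.succ_mul_centralBinom_succ n
    have key2 : ((n+1) * C)^2 = (2 * (2*n+1) * c)^2 := by rw [key]
    have hmain : 16^(n+1) * (n+1)^2 < 4*(n+1) * C^2 * (n+1)^2 := by
      have e : 4*(n+1) * C^2 * (n+1)^2 = 4*(n+1) * ((n+1)*C)^2 := by ring
      rw [e, key2]
      have step1 : 16^(n+1) * (n+1)^2 < 16*(n+1)^2 * (4 * n * c^2) := by
        have : 16^(n+1) * (n+1)^2 = 16*(n+1)^2 * 16^n := by ring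
        rw [this]
        exact Nat.mul_lt_mul_of_le_of_lt (le_refl _) ih (by positivity)
      have step2 : 16*(n+1)^2 * (4 * n * c^2) ≤ 4*(n+1) * (2 * (2*n+1) * c)^2 := by
        have e1 : 16*(n+1)^2 * (4 * n * c^2) = (16*(n+1)*c^2) * (4*n*(n+1)) := by ring
        have e2 : 4*(n+1) * (2 * (2*n+1) * c)^2 = (16*(n+1)*c^2) * ((2*n+1)^2) := by ring
        rw [e1, e2]
        exact Nat.mul_le_mul_left _ (by nlinarith)
      exact lt_of_lt_of_le step1 step2
    exact Nat.lt_of_mul_lt_mul_right hmain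

-- upper bound (nat): c_n (n+1)! < (2n+2)^n for n ≥ 3
lemma aux_upper : ∀ n, 3 ≤ n → Nat.centralBinom n * (n+1).factorial < (2*n+2)^n := by
  intro n hn
  induction n, hn using Nat.le_induction with
  | base => decide
  | succ n hn ih =>
    set c := Nat.centralBinom n with hc
    set C := Nat.centralBinom (n+1) with hC
    have key : (n+1) * C = 2 * (2*n+1) * c := Nat.succ_mul_centralBinom_succ n
    have hk := aux_key n (by omega)
    have hb : (2*n+2)^n = 2^n * (n+1)^n := by
      rw [show 2*n+2 = 2*(n+1) by ring, mul_pow]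
    have hb2 : (2*(n+1)+2)^(n+1) = 2^(n+1) * (n+2)^(n+1) := by
      rw [show 2*(n+1)+2 = 2*(n+2) by ring, mul_pow]
    have hf : (n+1+1).factorial = (n+2) * (n+1).factorial := Nat.factorial_succ (n+1)
    have hmul : C * (n+1+1).factorial * (n+1) < (2*(n+1)+2)^(n+1) * (n+1) := by
      have e1 : C * (n+1+1).factorial * (n+1)
          = (2*(2*n+1)*(n+2)) * (c * (n+1).factorial) := by
        rw [hf]
        calc C * ((n+2) * (n+1).factorial) * (n+1)
            = ((n+1) * C) * ((n+2) * (n+1).factorial) := by ring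
          _ = (2*(2*n+1)*c) * ((n+2) * (n+1).factorial) := by rw [key]
          _ = (2*(2*n+1)*(n+2)) * (c * (n+1).factorial) := by ring
      rw [e1]
      have step1 : (2*(2*n+1)*(n+2)) * (c * (n+1).factorial)
          < (2*(2*n+1)*(n+2)) * (2*n+2)^n :=
        Nat.mul_lt_mul_of_le_of_lt (le_refl _) ih (by positivity)
      have step2 : (2*(2*n+1)*(n+2)) * (2*n+2)^n ≤ (2*(n+1)+2)^(n+1) * (n+1) := by
        rw [hb, hb2, pow_succ 2 n, pow_succ (n+2) n]
        have e2 : 2*(2*n+1)*(n+2) * (2^n * (n+1)^n)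
            = (2^n*2*(n+2)) * ((2*n+1) * (n+1)^n) := by ring
        have e3 : 2^n*2 * ((n+2)^n*(n+2)) * (n+1)
            = (2^n*2*(n+2)) * ((n+1) * (n+2)^n) := by ring
        rw [e2, e3]
        exact Nat.mul_le_mul_left _ hk
      exact lt_of_lt_of_le step1 step2
    exact Nat.lt_of_mul_lt_mul_right hmul

/-- For every natural `n > 2`, the central binomial coefficient satisfies
`4^n / (2√n) < C(2n, n) < (2n+2)^n / (n+1)!`. -/
theorem central_binom_bounds (n : ℕ) (hn : 2 < n) :
    (4 : ℝ) ^ n / (2 * Real.sqrt n) < (Nat.choose (2 * n) n : ℝ) ∧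
    (Nat.choose (2 * n) n : ℝ) < (2 * n + 2 : ℝ) ^ n / (Nat.factorial (n + 1) : ℝ) := by
  have hcb : Nat.centralBinom n = (2*n).choose n := rfl
  constructor
  · have hl := aux_lower n (by omega)
    rw [hcb] at hl
    have hl' : (16:ℝ)^n < 4 * n * ((2*n).choose n : ℝ)^2 := by exact_mod_cast hl
    have hnpos : (0:ℝ) < n := by exact_mod_cast (by omega : 0 < n)
    set c : ℝ := ((2*n).choose n : ℝ) with hcdef
    have hcnn : (0:ℝ) ≤ c := Nat.cast_nonneg _
    have hs : (0:ℝ) < Real.sqrt n := Real.sqrt_pos.mpr hnpos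
    have hsq : Real.sqrt n ^ 2 = (n:ℝ) := Real.sq_sqrt (le_of_lt hnpos)
    have hpow : ((4:ℝ)^n)^2 < (2 * Real.sqrt n * c)^2 := by
      have e1 : ((4:ℝ)^n)^2 = 16^n := by
        rw [← pow_mul, mul_comm, pow_mul]; norm_num
      have e2 : (2 * Real.sqrt n * c)^2 = 4 * (Real.sqrt n ^ 2) * c^2 := by ring
      rw [e1, e2, hsq]
      exact hl'
    have hlt : (4:ℝ)^n < 2 * Real.sqrt n * c :=
      lt_of_pow_lt_pow_left₀ 2 (by positivity) hpow
    rw [div_lt_iff₀ (by positivity)]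
    linarith [hlt]
  · have hu := aux_upper n hn
    rw [hcb] at hu
    have hu' : ((2*n).choose n : ℝ) * ((n+1).factorial : ℝ) < (2*(n:ℝ)+2)^n := by
      exact_mod_cast hu
    rw [lt_div_iff₀ (by exact_mod_cast Nat.factorial_pos (n+1) : (0:ℝ) < ((n+1).factorial : ℝ))]
    exact hu'
end

section
/- For every real number p > 0 and every natural number n > 2, the binomial sum S_p(n) = ∑_{j=1}^{n} j^p · C(n+j, j) satisfies n^p · 4^n / (2√n) < S_p(n). -/
lemma sixteen_pow_le (n : ℕ) (hn : 1 ≤ n) :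
    16 ^ n ≤ 4 * n * (Nat.centralBinom n) ^ 2 := by
  induction n with
  | zero => omega
  | succ m ih =>
    rcases Nat.eq_or_lt_of_le hn with h | h
    · simp [← h]; decide
    · have hm : 1 ≤ m := by omega
      have ih' := ih hm
      have key : (m + 1) * Nat.centralBinom (m + 1) = 2 * (2 * m + 1) * Nat.centralBinom m :=
        Nat.succ_mul_centralBinom_succ m
      have hsq : (m + 1) ^ 2 * (Nat.centralBinom (m + 1)) ^ 2
          = 4 * (2 * m + 1) ^ 2 * (Nat.centralBinom m) ^ 2 := by
        have := congrArg (· ^ 2) key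
        ring_nf at this ⊢
        nlinarith [this]
      have goal2 : 16 ^ (m + 1) * (m + 1) ≤ 4 * (m + 1) ^ 2 * (Nat.centralBinom (m + 1)) ^ 2 := by
        calc 16 ^ (m + 1) * (m + 1) = 16 * 16 ^ m * (m + 1) := by ring
          _ ≤ 16 * (4 * m * (Nat.centralBinom m) ^ 2) * (m + 1) := by
              have := Nat.mul_le_mul_right (m + 1) (Nat.mul_le_mul_left 16 ih')
              linarith
          _ ≤ 16 * (2 * m + 1) ^ 2 * (Nat.centralBinom m) ^ 2 := by nlinarith
          _ = 4 * (m + 1) ^ 2 * (Nat.centralBinom (m + 1)) ^ 2 := by rw [show 4 * (m+1)^2 * (Nat.centralBinom (m+1))^2 = 4 * ((m+1)^2 * (Nat.centralBinom (m+1))^2) from by ring, hsq]; ring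
      have hpos : 0 < m + 1 := Nat.succ_pos m
      nlinarith [goal2]

lemma real_binom (n : ℕ) (hn : 1 ≤ n) :
    (4 : ℝ) ^ n ≤ 2 * Real.sqrt n * (Nat.centralBinom n : ℝ) := by
  have h16 : (16 : ℝ) ^ n ≤ 4 * n * (Nat.centralBinom n : ℝ) ^ 2 := by
    have := sixteen_pow_le n hn
    exact_mod_cast this
  have h4 : (0:ℝ) ≤ (4:ℝ)^n := by positivity
  have hrhs : (0:ℝ) ≤ 2 * Real.sqrt n * (Nat.centralBinom n : ℝ) := by positivity
  nlinarith [Real.sq_sqrt (by positivity : (0:ℝ) ≤ (n:ℝ)), Real.sqrt_nonneg (n:ℝ),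
    sq_nonneg ((4:ℝ)^n - 2 * Real.sqrt n * (Nat.centralBinom n : ℝ)),
    show ((4:ℝ)^n)^2 = 16^n from by rw [← pow_mul, mul_comm, pow_mul]; norm_num]
/-- For every real `p > 0` and natural `n > 2`, the binomial sum
`S_p(n) = ∑_{j=1}^n j^p * C(n+j, j)` satisfies `n^p * 4^n / (2√n) < S_p(n)`. -/
theorem binomial_sum_lower_bound_simple (p : ℝ) (hp : 0 < p) (n : ℕ) (hn : 2 < n) :
    (n : ℝ) ^ p * (4 : ℝ) ^ n / (2 * Real.sqrt n) <
      ∑ j ∈ Finset.Icc 1 n, (j : ℝ) ^ p * (Nat.choose (n + j) j : ℝ) := by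
  have hn1 : 1 ≤ n := by omega
  have hne : (1 : ℕ) ≠ n := by omega
  have hsub : ({1, n} : Finset ℕ) ⊆ Finset.Icc 1 n := by
    intro x hx
    simp only [Finset.mem_insert, Finset.mem_singleton] at hx
    rcases hx with h | h <;> simp [Finset.mem_Icc, h] <;> omega
  have hpair : ∑ j ∈ ({1, n} : Finset ℕ), (j : ℝ) ^ p * (Nat.choose (n + j) j : ℝ)
      ≤ ∑ j ∈ Finset.Icc 1 n, (j : ℝ) ^ p * (Nat.choose (n + j) j : ℝ) := by
    apply Finset.sum_le_sum_of_subset_of_nonneg hsub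
    intro i hi _
    positivity
  have hval : ∑ j ∈ ({1, n} : Finset ℕ), (j : ℝ) ^ p * (Nat.choose (n + j) j : ℝ)
      = ((n : ℝ) + 1) + (n : ℝ) ^ p * (Nat.centralBinom n : ℝ) := by
    rw [Finset.sum_pair hne]
    have h1 : Nat.choose (n + 1) 1 = n + 1 := by simp
    have h2 : n + n = 2 * n := by ring
    rw [h1, h2]
    simp [Nat.centralBinom]
  have hnp : (0 : ℝ) < (n : ℝ) ^ p := by
    apply Real.rpow_pos_of_pos
    exact_mod_cast Nat.pos_of_ne_zero (by omega)
  have hsq : (0 : ℝ) < 2 * Real.sqrt n := by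
    have : (0:ℝ) < (n:ℝ) := by exact_mod_cast Nat.pos_of_ne_zero (by omega)
    positivity
  have hkey : (n : ℝ) ^ p * (4 : ℝ) ^ n / (2 * Real.sqrt n)
      ≤ (n : ℝ) ^ p * (Nat.centralBinom n : ℝ) := by
    rw [div_le_iff₀ hsq]
    have := real_binom n hn1
    nlinarith [hnp.le]
  have hpos : (0 : ℝ) < (n : ℝ) + 1 := by positivity
  calc (n : ℝ) ^ p * (4 : ℝ) ^ n / (2 * Real.sqrt n)
      ≤ (n : ℝ) ^ p * (Nat.centralBinom n : ℝ) := hkey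
    _ < ((n : ℝ) + 1) + (n : ℝ) ^ p * (Nat.centralBinom n : ℝ) := by linarith
    _ = ∑ j ∈ ({1, n} : Finset ℕ), (j : ℝ) ^ p * (Nat.choose (n + j) j : ℝ) := hval.symm
    _ ≤ _ := hpair
end

section
/- For every real number p > 0 and every natural number n > 2, the binomial sum S_p(n) = ∑_{j=1}^{n} j^p · C(n+j, j) satisfies S_p(n) < (n^p · (2n+1)/(n+1) + n) · (2n+2)^n / (n+1)!. -/
/-!
Bounding `j ^ p ≤ n ^ p` reduces the claim to the sum `∑_{1 ≤ j ≤ n} C(n+j, j)`, which the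
hockey-stick identity bounds by `C(2n+1, n+1)`. Since `(n+1)! C(2n+1, n+1) = (n+1)(n+2)⋯(2n+1)`,
it remains to see `(n+1) · (n+1)(n+2)⋯(2n) ≤ (2n+2)^n`, which follows by pairing factors.
The summand `n` on the right-hand side only serves to make the inequality strict.
-/

open Finset Nat

theorem prod_range_add_two_eq_factorial (n : ℕ) : ∏ i ∈ range n, (i + 2) = (n + 1)! := by
  simpa using (prod_range_succ' (· + 1) n).symm.trans (prod_range_add_one_eq_factorial (n + 1))

theorem succ_mul_ascFactorial_le (n : ℕ) :
    (n + 1) * (n + 1).ascFactorial n ≤ (2 * n + 2) ^ n := by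
  -- Over `i < n` the factors `i + 2` and `i + 1` multiply to `(n + 1)!` and `n !`, ratio `n + 1`.
  have hpair : ∀ i ∈ range n, (n + 1 + i) * (i + 2) ≤ (2 * n + 2) * (i + 1) := by
    intro i hi
    have := mem_range.mp hi
    nlinarith
  have hprod := prod_le_prod' hpair
  rw [prod_mul_distrib, prod_mul_distrib, ← ascFactorial_eq_prod_range,
    prod_range_add_two_eq_factorial, prod_const, card_range, prod_range_add_one_eq_factorial,
    factorial_succ] at hprod
  refine Nat.le_of_mul_le_mul_right ?_ (factorial_pos n)
  linarith

theorem succ_mul_factorial_mul_choose_le (n : ℕ) :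
    (n + 1) * ((n + 1)! * (2 * n + 1).choose (n + 1)) ≤ (2 * n + 1) * (2 * n + 2) ^ n := by
  have h := ascFactorial_eq_factorial_mul_choose n (n + 1)
  rw [ascFactorial_succ, show n + (n + 1) = 2 * n + 1 by ring,
    show n + 1 + n = 2 * n + 1 by ring] at h
  rw [← h, mul_left_comm]
  exact Nat.mul_le_mul_left _ (succ_mul_ascFactorial_le n)

theorem sum_Icc_add_choose_le (n : ℕ) :
    ∑ j ∈ Icc 1 n, (n + j).choose j ≤ (2 * n + 1).choose (n + 1) := by
  calc ∑ j ∈ Icc 1 n, (n + j).choose j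
      ≤ ∑ j ∈ range (n + 1), (n + j).choose j := by
        refine sum_le_sum_of_subset fun j hj => ?_
        simp only [mem_Icc, mem_range] at hj ⊢
        omega
    _ = ∑ j ∈ range (n + 1), (j + n).choose n :=
        sum_congr rfl fun j _ => by rw [add_comm, ← choose_symm_add]
    _ = (2 * n + 1).choose (n + 1) := by rw [sum_range_add_choose, two_mul]

/-- For every real `p > 0` and natural `n > 2`, the binomial sum
`S_p(n) = ∑_{j=1}^n j^p * C(n+j, j)` satisfies
`S_p(n) < (n^p * (2n+1)/(n+1) + n) * (2n+2)^n / (n+1)!`. -/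
theorem binomial_sum_upper_bound_simple (p : ℝ) (hp : 0 < p) (n : ℕ) (hn : 2 < n) :
    ∑ j ∈ Finset.Icc 1 n, (j : ℝ) ^ p * (Nat.choose (n + j) j : ℝ) <
      ((n : ℝ) ^ p * ((2 * n + 1) / (n + 1)) + n) * (2 * n + 2 : ℝ) ^ n /
        (Nat.factorial (n + 1) : ℝ) := by
  have hnat : (n + 1) * ((n + 1)! * ∑ j ∈ Icc 1 n, (n + j).choose j) ≤
      (2 * n + 1) * (2 * n + 2) ^ n :=
    le_trans (by gcongr; exact sum_Icc_add_choose_le n) (succ_mul_factorial_mul_choose_le n)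
  have hchoose : (∑ j ∈ Icc 1 n, ((n + j).choose j : ℝ)) ≤
      (2 * n + 1) / (n + 1) * (2 * n + 2 : ℝ) ^ n / (n + 1)! := by
    rw [div_mul_eq_mul_div, div_div, le_div_iff₀ (by positivity)]
    calc _ = (((n + 1) * ((n + 1)! * ∑ j ∈ Icc 1 n, (n + j).choose j) : ℕ) : ℝ) := by
          push_cast
          ring
      _ ≤ _ := by exact_mod_cast hnat
  calc ∑ j ∈ Icc 1 n, (j : ℝ) ^ p * ((n + j).choose j : ℝ)
      ≤ ∑ j ∈ Icc 1 n, (n : ℝ) ^ p * ((n + j).choose j : ℝ) := by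
        gcongr with j hj
        exact_mod_cast (mem_Icc.mp hj).2
    _ ≤ (n : ℝ) ^ p * ((2 * n + 1) / (n + 1) * (2 * n + 2 : ℝ) ^ n / (n + 1)!) := by
        rw [← mul_sum]
        gcongr
    _ < (n : ℝ) ^ p * ((2 * n + 1) / (n + 1) * (2 * n + 2 : ℝ) ^ n / (n + 1)!) +
          n * (2 * n + 2 : ℝ) ^ n / (n + 1)! :=
        lt_add_of_pos_right _ (by positivity)
    _ = _ := by ring
end
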